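/- Let G be a graph on n vertices and G' be obtained from G by adding, for each pair of vertices u,v of G, an independent set I_{uv} of n new vertices each adjacent exactly to u and v. Then mmfvs(G') ≤ n·C(2α(G),2) + n, where α(G) is the independence number of G. -/

import Mathlib

open SimpleGraph

def IsFVS {V : Type*} (G : SimpleGraph V) (S : Set V) : Prop :=
  (G.induce Sᶜ).IsAcyclic

def IsMinFVS {V : Type*} (G : SimpleGraph V) (S : Set V) : Prop :=
  IsFVS G S ∧ ∀ T : Set V, T ⊂ S → ¬ IsFVS G T

noncomputable def mmfvs {V : Type*} (G : SimpleGraph V) : ℕ :=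
  sSup {k | ∃ S : Set V, IsMinFVS G S ∧ S.ncard = k}

def IsIndep {V : Type*} (G : SimpleGraph V) (S : Set V) : Prop :=
  ∀ a ∈ S, ∀ b ∈ S, ¬ G.Adj a b

/-- The independence number of `G`. -/
noncomputable def alphaNum {V : Type*} (G : SimpleGraph V) : ℕ :=
  sSup {k | ∃ S : Set V, IsIndep G S ∧ S.ncard = k}

/-- `G` together with, for each unordered pair `{u,v}` of distinct vertices,
an independent set of `n` new vertices each adjacent exactly to `u` and `v`. -/
def pairBlowup {V : Type*} (G : SimpleGraph V) (n : ℕ) :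
    SimpleGraph (V ⊕ ({e : Sym2 V // ¬ e.IsDiag} × Fin n)) where
  Adj x y :=
    match x, y with
    | Sum.inl a, Sum.inl b => G.Adj a b
    | Sum.inl a, Sum.inr (e, _) => a ∈ e.1
    | Sum.inr (e, _), Sum.inl a => a ∈ e.1
    | Sum.inr _, Sum.inr _ => False
  symm := ⟨by rintro (a | e) (b | f) h <;> simp_all [SimpleGraph.adj_comm]⟩
  loopless := ⟨by rintro (a | e) <;> simp⟩

/-!
A minimal feedback vertex set `S` of any graph has the property that each of its vertices has
at least two neighbours outside `S`: otherwise it could be put back without creating a cycle.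
In `G'` a new vertex of `I_{uv}` has only the neighbours `u` and `v`, so it lies in `S` only if
both `u` and `v` lie outside `S`. The old vertices outside `S` induce a forest of `G`, which is
bipartite and so has at most `2 α(G)` vertices. Hence `S` contains at most `n` vertices of `V`
and at most `n` vertices from each of the at most `C(2 α(G), 2)` sets `I_{uv}` with `u, v ∉ S`.
-/

namespace SimpleGraph

variable {V : Type*} {G : SimpleGraph V}

theorem isAcyclic_induce_iff {s : Set V} :
    (G.induce s).IsAcyclic ↔
      ∀ ⦃u : V⦄ (c : G.Walk u u), c.IsCycle → ∃ x ∈ c.support, x ∉ s := by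
  let ι : G.induce s ↪g G := Embedding.induce s
  refine ⟨fun h u c hc => ?_, fun h u c hc => ?_⟩
  · by_contra! hs
    refine h (c.induce s hs) ?_
    rwa [← Walk.isCycle_map_iff_of_injective (f := ι.toHom) ι.injective, Walk.map_induce]
  · obtain ⟨x, hx, hxs⟩ := h _ (hc.map (f := ι.toHom) ι.injective)
    obtain ⟨y, -, rfl⟩ := List.mem_map.1 (Walk.support_map _ c ▸ hx)
    exact hxs y.2

theorem Walk.IsCycle.exists_adj_ne {u : V} {c : G.Walk u u} (hc : c.IsCycle) :
    ∃ x ∈ c.support, ∃ y ∈ c.support, x ≠ y ∧ G.Adj u x ∧ G.Adj u y :=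
  ⟨c.snd, c.getVert_mem_support 1, c.penultimate, c.getVert_mem_support _,
    hc.snd_ne_penultimate, c.adj_snd hc.not_nil, (c.adj_penultimate hc.not_nil).symm⟩

theorem isAcyclic_induce_insert {s : Set V} {w : V} (hs : (G.induce s).IsAcyclic)
    (hw : (G.neighborSet w ∩ s).Subsingleton) : (G.induce (insert w s)).IsAcyclic := by
  classical
  rw [isAcyclic_induce_iff] at hs ⊢
  intro u c hc
  by_contra! hcs
  by_cases hwc : w ∈ c.support
  · obtain ⟨x, hx, y, hy, hxy, hwx, hwy⟩ := (hc.rotate hwc).exists_adj_ne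
    have hmem {z : V} (hz : z ∈ (c.rotate w hwc).support) (hwz : G.Adj w z) :
        z ∈ G.neighborSet w ∩ s :=
      ⟨hwz, (hcs z ((c.mem_support_rotate_iff w hwc).1 hz)).resolve_left hwz.ne'⟩
    exact hxy (hw (hmem hx hwx) (hmem hy hwy))
  · obtain ⟨x, hx, hxs⟩ := hs c hc
    exact hxs ((hcs x hx).resolve_left (ne_of_mem_of_not_mem hx hwc))

end SimpleGraph

section

variable {V : Type*} {G : SimpleGraph V}

theorem IsMinFVS.nontrivial_neighborSet_inter_compl {S : Set V} (hS : IsMinFVS G S) {w : V}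
    (hw : w ∈ S) : (G.neighborSet w ∩ Sᶜ).Nontrivial := by
  rw [← Set.not_subsingleton_iff]
  intro hsub
  refine hS.2 (S \ {w}) (Set.sdiff_singleton_ssubset.2 hw) ?_
  rw [IsFVS, Set.compl_sdiff, Set.singleton_union]
  exact isAcyclic_induce_insert hS.1 hsub

theorem ncard_le_alphaNum [Finite V] {S : Set V} (hS : IsIndep G S) : S.ncard ≤ alphaNum G :=
  le_csSup ⟨Nat.card V, by rintro _ ⟨T, -, rfl⟩; exact T.ncard_le_card⟩ ⟨S, hS, rfl⟩

theorem ncard_le_two_mul_alphaNum [Finite V] {s : Set V} (hs : (G.induce s).IsAcyclic) :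
    s.ncard ≤ 2 * alphaNum G := by
  obtain ⟨C⟩ := hs.colorable_two
  let colorClass (i : Fin 2) : Set V := {v | ∃ h : v ∈ s, C ⟨v, h⟩ = i}
  have hindep (i : Fin 2) : IsIndep G (colorClass i) := by
    rintro a ⟨ha, rfl⟩ b ⟨hb, hab⟩ hadj
    exact C.valid (show (G.induce s).Adj ⟨a, ha⟩ ⟨b, hb⟩ from hadj) hab.symm
  have hcover : s ⊆ colorClass 0 ∪ colorClass 1 := fun v hv => by
    by_cases h : C ⟨v, hv⟩ = 0
    · exact Or.inl ⟨hv, h⟩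
    · exact Or.inr ⟨hv, Fin.eq_one_of_ne_zero _ h⟩
  calc s.ncard ≤ (colorClass 0 ∪ colorClass 1).ncard := Set.ncard_le_ncard hcover
    _ ≤ (colorClass 0).ncard + (colorClass 1).ncard := Set.ncard_union_le _ _
    _ ≤ 2 * alphaNum G := by
      linarith [ncard_le_alphaNum (hindep 0), ncard_le_alphaNum (hindep 1)]

theorem ncard_setOf_forall_mem_le_choose [Finite V] (F : Set V) :
    {e : {e : Sym2 V // ¬ e.IsDiag} | ∀ v ∈ e.1, v ∈ F}.ncard ≤ F.ncard.choose 2 := by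
  let restrict (e : {e : {e : Sym2 V // ¬ e.IsDiag} | ∀ v ∈ e.1, v ∈ F}) :
      {z : Sym2 F // ¬ z.IsDiag} :=
    ⟨e.1.1.attachWith e.2, by
      rw [← Sym2.isDiag_map Subtype.val_injective, Sym2.attachWith_map_subtypeVal]
      exact e.1.2⟩
  have hrestrict : Function.Injective restrict := fun a b hab => by
    have h := congrArg (Sym2.map Subtype.val ∘ Subtype.val) hab
    simp only [Function.comp_apply, restrict, Sym2.attachWith_map_subtypeVal] at h
    exact Subtype.ext (Subtype.ext h)
  calc _ = Nat.card _ := (Nat.card_coe_set_eq _).symm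
    _ ≤ Nat.card {z : Sym2 F // ¬ z.IsDiag} := Nat.card_le_card_of_injective _ hrestrict
    _ = F.ncard.choose 2 := by rw [Sym2.natCard_subtype_not_diag, Nat.card_coe_set_eq]

section pairBlowup

variable {n : ℕ} {S : Set (V ⊕ ({e : Sym2 V // ¬ e.IsDiag} × Fin n))}

theorem IsFVS.isAcyclic_induce_preimage_inl (hS : IsFVS (pairBlowup G n) S) :
    (G.induce (Sum.inl ⁻¹' Sᶜ)).IsAcyclic :=
  hS.comap ⟨fun v => ⟨Sum.inl v.1, v.2⟩, fun h => h⟩ fun _ _ hab =>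
    Subtype.ext (Sum.inl_injective (congrArg Subtype.val hab))

theorem IsMinFVS.inl_notMem_of_inr_mem (hS : IsMinFVS (pairBlowup G n) S)
    {e : {e : Sym2 V // ¬ e.IsDiag}} {i : Fin n} (hei : Sum.inr (e, i) ∈ S) {v : V}
    (hv : v ∈ e.1) : Sum.inl v ∉ S := by
  obtain ⟨x, ⟨hx, hxS⟩, y, ⟨hy, hyS⟩, hxy⟩ := hS.nontrivial_neighborSet_inter_compl hei
  rcases x with a | _ <;> rcases y with b | _ <;> try first | exact hx.elim | exact hy.elim
  have hab : a ≠ b := fun h => hxy (congrArg Sum.inl h)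
  rw [(Sym2.mem_and_mem_iff hab).1 ⟨hx, hy⟩, Sym2.mem_iff] at hv
  rcases hv with rfl | rfl
  exacts [hxS, hyS]

theorem IsMinFVS.ncard_le_of_pairBlowup [Finite V] (hS : IsMinFVS (pairBlowup G n) S) :
    S.ncard ≤ n * (2 * alphaNum G).choose 2 + Nat.card V := by
  set P := {e : {e : Sym2 V // ¬ e.IsDiag} | ∀ v ∈ e.1, v ∈ Sum.inl ⁻¹' Sᶜ}
  have hsub : S ⊆ Set.range Sum.inl ∪ Sum.inr '' (P ×ˢ Set.univ) := by
    rintro (v | ⟨e, i⟩) h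
    · exact Or.inl ⟨v, rfl⟩
    · exact Or.inr ⟨(e, i), ⟨fun v hv => hS.inl_notMem_of_inr_mem h hv, trivial⟩, rfl⟩
  have hP : P.ncard ≤ (2 * alphaNum G).choose 2 :=
    (ncard_setOf_forall_mem_le_choose _).trans <| Nat.choose_le_choose 2 <|
      ncard_le_two_mul_alphaNum hS.1.isAcyclic_induce_preimage_inl
  calc S.ncard ≤ (Set.range Sum.inl ∪ Sum.inr '' (P ×ˢ Set.univ)).ncard :=
        Set.ncard_le_ncard hsub
    _ ≤ (Set.range Sum.inl).ncard + (Sum.inr '' (P ×ˢ Set.univ)).ncard := Set.ncard_union_le _ _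
    _ = Nat.card V + P.ncard * n := by
      rw [Set.ncard_range_of_injective Sum.inl_injective,
        Set.ncard_image_of_injective _ Sum.inr_injective, Set.ncard_prod, Set.ncard_univ,
        Nat.card_fin]
    _ ≤ n * (2 * alphaNum G).choose 2 + Nat.card V := by rw [add_comm, mul_comm]; gcongr

end pairBlowup

end

theorem mmfvs_pairBlowup_upper_bound {V : Type*} [Fintype V] (G : SimpleGraph V) :
    mmfvs (pairBlowup G (Fintype.card V)) ≤
      Fintype.card V * (2 * alphaNum G).choose 2 + Fintype.card V := by
  refine csSup_le' ?_
  rintro _ ⟨S, hS, rfl⟩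
  simpa only [Nat.card_eq_fintype_card] using hS.ncard_le_of_pairBlowup
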